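/- Let T ∈ ℝ^{n×n} and let H ∈ ℝ^{n×n} be symmetric (Hᵀ = H). Set T̃ = [[T, H],[0, −Tᵀ]]. Then exp(T̃) = [[F, D],[0, F⁻ᵀ]] where F = exp(T), F⁻ᵀ = (Fᵀ)⁻¹ = exp(−Tᵀ), and D = L_exp(T, −Tᵀ, H); moreover F⁻¹·D is symmetric. -/

import Mathlib

/-!
The diagonal blocks of a block upper-triangular matrix multiply independently, so the exponential
series of `[[T, H], [0, -Tᵀ]]` has diagonal blocks `exp T` and `exp (-Tᵀ) = (exp T)⁻ᵀ`.
Since `H` is symmetric, `[[T, H], [0, -Tᵀ]]` is Hamiltonian, so its exponential is symplectic;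
for a block upper-triangular symplectic matrix `[[F, D], [0, G]]` this says that `Gᵀ D` is
symmetric, and here `Gᵀ = F⁻¹`.
-/

open scoped Matrix

/-- `L_exp(A, B, E)` is the `(1,2)` block of `exp [[A, E],[0, B]]`, over `ℝ`. -/
noncomputable def Lexp {n d : ℕ} (A : Matrix (Fin n) (Fin n) ℝ) (B : Matrix (Fin d) (Fin d) ℝ)
    (E : Matrix (Fin n) (Fin d) ℝ) : Matrix (Fin n) (Fin d) ℝ :=
  (NormedSpace.exp (Matrix.fromBlocks A E 0 B)).toBlocks₁₂

open NormedSpace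

namespace Matrix

variable {ι l m n o R 𝕂 : Type*}

theorem _root_.HasSum.matrix_submatrix [AddCommMonoid R] [TopologicalSpace R]
    {f : ι → Matrix m n R} {a : Matrix m n R} (hf : HasSum f a) (r : l → m) (c : o → n) :
    HasSum (fun x => (f x).submatrix r c) (a.submatrix r c) :=
  Pi.hasSum.2 fun i => Pi.hasSum.2 fun j => Pi.hasSum.1 (Pi.hasSum.1 hf (r i)) (c j)

theorem fromBlocks_zero₂₁_pow [Fintype m] [Fintype n] [DecidableEq m] [DecidableEq n] [Semiring R]
    (A : Matrix m m R) (E : Matrix m n R) (B : Matrix n n R) (k : ℕ) :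
    ∃ X, fromBlocks A E 0 B ^ k = fromBlocks (A ^ k) X 0 (B ^ k) := by
  induction k with
  | zero => exact ⟨0, by simp⟩
  | succ k ih =>
    obtain ⟨X, hX⟩ := ih
    exact ⟨A ^ k * E + X * B, by simp [pow_succ, hX, fromBlocks_multiply]⟩

theorem semiconjBy_J_transpose_fromBlocks [DecidableEq l] [Fintype l] [CommRing R]
    {T H : Matrix l l R} (hH : Hᵀ = H) :
    SemiconjBy (J l R) (fromBlocks T H 0 (-Tᵀ))ᵀ (-fromBlocks T H 0 (-Tᵀ)) := by
  simp [SemiconjBy, J, fromBlocks_transpose, fromBlocks_multiply, fromBlocks_neg, hH]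

section RCLike

variable [RCLike 𝕂]

theorem hasSum_exp [Fintype m] [DecidableEq m] (A : Matrix m m 𝕂) :
    HasSum (fun k => (k.factorial⁻¹ : ℚ) • A ^ k) (exp A) :=
  open scoped Norms.Operator in exp_series_hasSum_exp' A

theorem exp_fromBlocks_zero₂₁ [Fintype m] [Fintype n] [DecidableEq m] [DecidableEq n]
    (A : Matrix m m 𝕂) (E : Matrix m n 𝕂) (B : Matrix n n 𝕂) :
    exp (fromBlocks A E 0 B) =
      fromBlocks (exp A) (exp (fromBlocks A E 0 B)).toBlocks₁₂ 0 (exp B) := by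
  set M := fromBlocks A E 0 B
  have hM := hasSum_exp M
  have hterm (k : ℕ) : ∃ X, (k.factorial⁻¹ : ℚ) • M ^ k =
      fromBlocks ((k.factorial⁻¹ : ℚ) • A ^ k) X 0 ((k.factorial⁻¹ : ℚ) • B ^ k) := by
    obtain ⟨X, hX⟩ := fromBlocks_zero₂₁_pow A E B k
    exact ⟨_, by rw [hX, fromBlocks_smul, smul_zero]⟩
  rw [← fromBlocks_toBlocks (exp M)]
  congr 1
  · refine (hM.matrix_submatrix Sum.inl Sum.inl).unique ?_
    convert hasSum_exp A using 2 with k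
    obtain ⟨X, hX⟩ := hterm k
    rw [hX]; rfl
  · refine (hM.matrix_submatrix Sum.inr Sum.inl).unique ?_
    convert hasSum_zero using 2 with k
    obtain ⟨X, hX⟩ := hterm k
    rw [hX]; rfl
  · refine (hM.matrix_submatrix Sum.inr Sum.inr).unique ?_
    convert hasSum_exp B using 2 with k
    obtain ⟨X, hX⟩ := hterm k
    rw [hX]; rfl

theorem exp_mul_mul_exp_transpose_of_semiconjBy [Fintype m] [DecidableEq m]
    {M P : Matrix m m 𝕂} (hM : SemiconjBy P Mᵀ (-M)) : exp M * P * (exp M)ᵀ = P := by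
  have h : exp (-(-M)) * P * exp Mᵀ = P :=
    open scoped Norms.Operator in hM.exp_neg_mul_mul_exp_eq_self
  rwa [neg_neg, exp_transpose] at h

end RCLike

end Matrix

open Matrix

/-- For `T̃ = [[T, H],[0, −Tᵀ]]` with `H` symmetric, `exp(T̃) = [[F, D],[0, F⁻ᵀ]]` with
`F = exp(T)`, `F⁻ᵀ = (Fᵀ)⁻¹ = exp(−Tᵀ)`, and `D = L_exp(T, −Tᵀ, H)`; moreover
`F⁻¹ ⬝ D` is symmetric. -/
theorem exp_blockTriangular_hamiltonian {n : ℕ} (T H : Matrix (Fin n) (Fin n) ℝ)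
    (hH : Hᵀ = H) :
    NormedSpace.exp (Matrix.fromBlocks T H 0 (-Tᵀ)) =
      Matrix.fromBlocks (NormedSpace.exp T) (Lexp T (-Tᵀ) H) 0 ((NormedSpace.exp T)ᵀ)⁻¹ ∧
    ((NormedSpace.exp T)ᵀ)⁻¹ = NormedSpace.exp (-Tᵀ) ∧
    ((NormedSpace.exp T)⁻¹ * Lexp T (-Tᵀ) H)ᵀ =
      (NormedSpace.exp T)⁻¹ * Lexp T (-Tᵀ) H := by
  have hinv : ((exp T)ᵀ)⁻¹ = exp (-Tᵀ) := by rw [Matrix.exp_neg, exp_transpose]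
  have hblock : exp (fromBlocks T H 0 (-Tᵀ)) =
      fromBlocks (exp T) (Lexp T (-Tᵀ) H) 0 ((exp T)ᵀ)⁻¹ := by
    rw [hinv]
    exact exp_fromBlocks_zero₂₁ T H (-Tᵀ)
  refine ⟨hblock, hinv, ?_⟩
  have hsymp : exp (fromBlocks T H 0 (-Tᵀ)) ∈ symplecticGroup (Fin n) ℝ :=
    SymplecticGroup.mem_iff.2 <|
      exp_mul_mul_exp_transpose_of_semiconjBy (semiconjBy_J_transpose_fromBlocks hH)
  rw [hblock, SymplecticGroup.fromBlocks_mem_iff] at hsymp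
  obtain ⟨-, hD, -⟩ := hsymp
  calc ((exp T)⁻¹ * Lexp T (-Tᵀ) H)ᵀ = (Lexp T (-Tᵀ) H)ᵀ * ((exp T)ᵀ)⁻¹ := by
        rw [transpose_mul, transpose_nonsing_inv]
    _ = (((exp T)ᵀ)⁻¹)ᵀ * Lexp T (-Tᵀ) H := hD
    _ = (exp T)⁻¹ * Lexp T (-Tᵀ) H := by rw [transpose_nonsing_inv, transpose_transpose]
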